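/- (Sup-norm stability of the Legendre projection.) For every integer ℓ ≥ 0, every h > 0, and every continuous g : [0,h] → ℝ, the L²([0,h])-orthogonal projection P onto polynomials of degree at most ℓ satisfies sup_{x∈[0,h]} |(Pg)(x)| ≤ (ℓ+1)² sup_{x∈[0,h]} |g(x)|. -/

import Mathlib

/-!
On `[-1, 1]` every Legendre polynomial satisfies `|p_k| ≤ 1`. Writing `p_k = Q / (2^k k!)` with
`Q = D^k (x² - 1)^k`, the function `F = k(k+1) Q² + (1 - x²) Q'²` has `F' = 2x Q'²` by the
Legendre equation, so on `[-1, 1]` it is largest at `±1`, where `F = k(k+1) (2^k k!)²`; since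
`k(k+1) Q² ≤ F` there, `|Q| ≤ 2^k k!`. Then each summand of `Pg(x)` is bounded by
`(2k+1)/h · hM · 1`, and `∑_{k ≤ ℓ} (2k+1) = (ℓ+1)²`.
-/

open MeasureTheory Real Set

/-- The degree-`k` Legendre polynomial on `[-1,1]` (Rodrigues' formula), normalized
so that `∫_{-1}^1 p_k(x)^2 dx = 2/(2k+1)`. -/
noncomputable def legendreP (k : ℕ) : ℝ → ℝ :=
  fun x => (1 / ((2:ℝ) ^ k * (Nat.factorial k : ℝ))) *
    iteratedDeriv k (fun y : ℝ => (y ^ 2 - 1) ^ k) x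

/-- The `L²([0,h])`-orthogonal projection onto polynomials of degree at most `ℓ`,
written in terms of the translated and scaled Legendre polynomials. -/
noncomputable def legProj (ℓ : ℕ) (h : ℝ) (g : ℝ → ℝ) : ℝ → ℝ :=
  fun x => ∑ k ∈ Finset.range (ℓ + 1),
    ((2 * (k : ℝ) + 1) / h) * (∫ y in (0:ℝ)..h, g y * legendreP k (2 * y / h - 1)) *
      legendreP k (2 * x / h - 1)

open Polynomial Nat

theorem Polynomial.iteratedDeriv_eval {𝕜 : Type*} [NontriviallyNormedField 𝕜] (p : 𝕜[X])
    (n : ℕ) : iteratedDeriv n (fun x => p.eval x) = fun x => (derivative^[n] p).eval x := by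
  induction n with
  | zero => rfl
  | succ n ih =>
    rw [iteratedDeriv_succ, ih, Function.iterate_succ_apply']
    funext x
    exact Polynomial.deriv _

noncomputable def rodriguesPoly (R : Type*) [CommRing R] (k : ℕ) : R[X] :=
  derivative^[k] ((X ^ 2 - 1) ^ k)

theorem legendreP_eq_eval_rodriguesPoly (k : ℕ) (x : ℝ) :
    legendreP k x = (rodriguesPoly ℝ k).eval x / (2 ^ k * k !) := by
  have h : (fun y : ℝ => (y ^ 2 - 1) ^ k) = fun y => ((X ^ 2 - 1) ^ k : ℝ[X]).eval y := by
    simp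
  rw [legendreP, h, iteratedDeriv_eval, rodriguesPoly, one_div_mul_eq_div]

section CommRing

variable {R : Type*} [CommRing R]

theorem X_sq_sub_one_eq_mul : (X ^ 2 - 1 : R[X]) = (X - C 1) * (X - C (-1)) := by
  simp only [map_one, map_neg, sub_neg_eq_add]; ring

theorem rodriguesPoly_eval_one (k : ℕ) : (rodriguesPoly R k).eval 1 = 2 ^ k * k ! := by
  rw [rodriguesPoly, X_sq_sub_one_eq_mul, mul_pow, iterate_derivative_mul, eval_finsetSum,
    Finset.sum_eq_single 0]
  · rw [Nat.choose_zero_right, one_smul, Nat.sub_zero, Function.iterate_zero_apply,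
      iterate_derivative_X_sub_pow_self]
    simp only [eval_mul, eval_natCast, eval_pow, eval_sub, eval_X, eval_C]
    norm_num; ring
  · intro i hi hi0
    rw [iterate_derivative_X_sub_pow, smul_mul_assoc, eval_smul, eval_smul, eval_mul]
    simp [zero_pow (by simp at hi; omega : k - (k - i) ≠ 0)]
  · simp

theorem rodriguesPoly_eval_neg_one (k : ℕ) :
    (rodriguesPoly R k).eval (-1) = (-2) ^ k * k ! := by
  rw [rodriguesPoly, X_sq_sub_one_eq_mul, mul_pow, iterate_derivative_mul, eval_finsetSum,
    Finset.sum_eq_single k]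
  · rw [Nat.choose_self, one_smul, Nat.sub_self, Function.iterate_zero_apply,
      iterate_derivative_X_sub_pow_self]
    simp only [eval_mul, eval_natCast, eval_pow, eval_sub, eval_X, eval_C]
    norm_num
  · intro i hi hik
    rw [iterate_derivative_X_sub_pow k i, mul_smul_comm, eval_smul, eval_smul, eval_mul]
    simp [zero_pow (by simp at hi; omega : k - i ≠ 0)]
  · simp

theorem iterate_derivative_X_sq_sub_one_mul (p : R[X]) (n : ℕ) :
    derivative^[n + 2] ((X ^ 2 - 1) * p) =
      (X ^ 2 - 1) * derivative^[n + 2] p + 2 * (n + 2 : R[X]) * X * derivative^[n + 1] p +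
        ((n + 2) * (n + 1) : R[X]) * derivative^[n] p := by
  induction n with
  | zero =>
    simp only [zero_add, Function.iterate_succ, Function.comp_apply, derivative_mul,
      derivative_sub, derivative_X_pow_succ, cast_one, map_add, map_one, pow_one, derivative_one,
      sub_zero, add_zero, zero_mul, derivative_X, mul_one, cast_zero, Function.iterate_zero, id_eq]
    ring
  | succ n ih =>
    rw [Function.iterate_succ_apply', ih]
    simp only [Function.iterate_succ_apply', derivative_mul, derivative_sub,
      derivative_X_pow_succ, cast_one, map_add, map_one, pow_one, derivative_one, sub_zero,
      derivative_ofNat, zero_mul, derivative_natCast, add_zero, mul_zero, derivative_X, mul_one,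
      zero_add, cast_add]
    ring

/-- Legendre's differential equation, obtained by differentiating
`(X² - 1) u' = 2k X u` (for `u = (X² - 1)^k`) `k + 1` times. -/
theorem rodriguesPoly_ode (k : ℕ) :
    (1 - X ^ 2) * derivative (derivative (rodriguesPoly R k)) -
      2 * X * derivative (rodriguesPoly R k) + C (k * (k + 1) : R) * rodriguesPoly R k = 0 := by
  rcases k with _ | m
  · simp [rodriguesPoly]
  set u : R[X] := (X ^ 2 - 1) ^ (m + 1)
  have hu : (X ^ 2 - 1) * derivative u = ((2 * (m + 1) : ℕ) : R[X]) * (u * X) := by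
    rw [derivative_pow_succ, derivative_sub, derivative_X_sq, derivative_one, sub_zero, C_ofNat,
      map_add, map_natCast, map_one]
    push_cast
    ring
  have hu' := congrArg (derivative^[m + 2]) hu
  rw [iterate_derivative_X_sq_sub_one_mul, iterate_derivative_natCast_mul,
    iterate_derivative_mul_X] at hu'
  simp only [← Function.iterate_succ_apply] at hu'
  simp only [rodriguesPoly, ← Function.iterate_succ_apply' derivative, map_mul, map_add,
    map_natCast, map_one]
  push_cast at hu' ⊢
  linear_combination -hu'

end CommRing

theorem le_max_of_forall_mul_deriv_nonneg {f : ℝ → ℝ} (hf : Differentiable ℝ f)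
    (hf' : ∀ y, 0 ≤ y * deriv f y) {a b x : ℝ} (hx : x ∈ Icc a b) : f x ≤ max (f a) (f b) := by
  rcases le_total 0 x with hx0 | hx0
  · have hmono : MonotoneOn f (Ici 0) :=
      monotoneOn_of_deriv_nonneg (convex_Ici 0) hf.continuous.continuousOn hf.differentiableOn
        fun y hy => nonneg_of_mul_nonneg_right (hf' y) (by simpa using hy)
    exact (hmono hx0 (hx0.trans hx.2) hx.2).trans (le_max_right _ _)
  · have hanti : AntitoneOn f (Iic 0) :=
      antitoneOn_of_deriv_nonpos (convex_Iic 0) hf.continuous.continuousOn hf.differentiableOn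
        fun y hy => nonpos_of_mul_nonneg_right (hf' y) (by simpa using hy)
    exact (hanti (hx.1.trans hx0) hx0 hx.1).trans (le_max_left _ _)

theorem sq_eval_le_max_of_legendre_ode {Q : ℝ[X]} {c : ℝ} (hc : 0 < c)
    (hQ : (1 - X ^ 2) * derivative (derivative Q) - 2 * X * derivative Q + C c * Q = 0)
    {x : ℝ} (hx : x ∈ Icc (-1) 1) : Q.eval x ^ 2 ≤ max (Q.eval (-1) ^ 2) (Q.eval 1 ^ 2) := by
  set F : ℝ[X] := C c * Q ^ 2 + (1 - X ^ 2) * derivative Q ^ 2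
  have hF' : derivative F = 2 * X * derivative Q ^ 2 := by
    simp only [F, derivative_add, derivative_mul, derivative_sub, derivative_pow, derivative_C,
      derivative_one, derivative_X, Nat.cast_ofNat, C_ofNat]
    linear_combination 2 * derivative Q * hQ
  have hmax : F.eval x ≤ max (F.eval (-1)) (F.eval 1) := by
    refine le_max_of_forall_mul_deriv_nonneg F.differentiable (fun y => ?_) hx
    rw [Polynomial.deriv, hF']
    simp only [eval_mul, eval_pow, eval_X, eval_ofNat]
    nlinarith [sq_nonneg y, sq_nonneg (y * (derivative Q).eval y)]
  have hlow : c * Q.eval x ^ 2 ≤ F.eval x := by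
    have : 0 ≤ 1 - x ^ 2 := by nlinarith [hx.1, hx.2]
    simp only [F, eval_add, eval_mul, eval_sub, eval_pow, eval_X, eval_one, eval_C]
    nlinarith [mul_nonneg this (sq_nonneg ((derivative Q).eval x))]
  have hends : max (F.eval (-1)) (F.eval 1) = c * max (Q.eval (-1) ^ 2) (Q.eval 1 ^ 2) := by
    simp [F, mul_max_of_nonneg _ _ hc.le]
  exact le_of_mul_le_mul_left (hlow.trans (hmax.trans hends.le)) hc

theorem abs_legendreP_le_one (k : ℕ) {x : ℝ} (hx : x ∈ Icc (-1) 1) : |legendreP k x| ≤ 1 := by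
  rw [legendreP_eq_eval_rodriguesPoly, abs_div, div_le_one (by positivity),
    abs_of_pos (by positivity : (0 : ℝ) < 2 ^ k * k !)]
  rcases k.eq_zero_or_pos with rfl | hk
  · simp [rodriguesPoly]
  have hc : (0 : ℝ) < k * (k + 1) := mul_pos (by exact_mod_cast hk) (by positivity)
  have hsq := sq_eval_le_max_of_legendre_ode hc (rodriguesPoly_ode k) hx
  have hsym : ((-2 : ℝ) ^ k * k !) ^ 2 = (2 ^ k * k !) ^ 2 := by
    rw [neg_pow, mul_assoc, mul_pow, ← pow_mul, mul_comm k, pow_mul, neg_one_sq, one_pow, one_mul]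
  rw [rodriguesPoly_eval_one, rodriguesPoly_eval_neg_one, hsym, max_self] at hsq
  exact abs_le_of_sq_le_sq hsq (by positivity)

theorem two_mul_div_sub_one_mem_Icc {h y : ℝ} (hh : 0 < h) (hy : y ∈ Icc 0 h) :
    2 * y / h - 1 ∈ Icc (-1) 1 := by
  have : 2 * y / h ∈ Icc 0 2 :=
    ⟨by have := hy.1; positivity, (div_le_iff₀ hh).2 (by linarith [hy.2])⟩
  constructor <;> linarith [this.1, this.2]

theorem sum_range_two_mul_add_one {R : Type*} [CommSemiring R] (n : ℕ) :
    ∑ k ∈ Finset.range n, (2 * (k : R) + 1) = (n : R) ^ 2 := by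
  induction n with
  | zero => simp
  | succ n ih => rw [Finset.sum_range_succ, ih]; push_cast; ring

theorem abs_intervalIntegral_mul_le {f w : ℝ → ℝ} {a b M : ℝ} (hab : a ≤ b)
    (hf : ∀ y ∈ Icc a b, |f y| ≤ M) (hw : ∀ y ∈ Icc a b, |w y| ≤ 1) :
    |∫ y in a..b, f y * w y| ≤ M * (b - a) := by
  have hM : 0 ≤ M := (abs_nonneg _).trans (hf a (left_mem_Icc.2 hab))
  have hbound : ∀ y ∈ uIoc a b, ‖f y * w y‖ ≤ M := fun y hy => by
    rw [uIoc_of_le hab] at hy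
    have hy' := Ioc_subset_Icc_self hy
    rw [Real.norm_eq_abs, abs_mul, ← mul_one M]
    exact mul_le_mul (hf y hy') (hw y hy') (abs_nonneg _) hM
  simpa [abs_of_nonneg (sub_nonneg.2 hab)] using
    intervalIntegral.norm_integral_le_of_norm_le_const hbound

theorem legProj_sup_norm_stability_general
    (ℓ : ℕ) (h : ℝ) (hh : 0 < h) (g : ℝ → ℝ)
    (M : ℝ) (hM : ∀ y ∈ Set.Icc (0:ℝ) h, |g y| ≤ M) :
    ∀ x ∈ Set.Icc (0:ℝ) h, |legProj ℓ h g x| ≤ ((ℓ : ℝ) + 1) ^ 2 * M := by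
  intro x hx
  have hM0 : 0 ≤ M := (abs_nonneg _).trans (hM 0 (left_mem_Icc.2 hh.le))
  have hP (k : ℕ) {y : ℝ} (hy : y ∈ Icc 0 h) : |legendreP k (2 * y / h - 1)| ≤ 1 :=
    abs_legendreP_le_one k (two_mul_div_sub_one_mem_Icc hh hy)
  have hcoeff (k : ℕ) : |∫ y in (0 : ℝ)..h, g y * legendreP k (2 * y / h - 1)| ≤ M * h := by
    simpa using abs_intervalIntegral_mul_le hh.le hM fun y hy => hP k hy
  calc |legProj ℓ h g x|
      ≤ ∑ k ∈ Finset.range (ℓ + 1), (2 * (k : ℝ) + 1) / h * (M * h) * 1 := by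
        refine (Finset.abs_sum_le_sum_abs _ _).trans (Finset.sum_le_sum fun k _ => ?_)
        rw [abs_mul, abs_mul, abs_of_pos (by positivity : (0 : ℝ) < (2 * k + 1) / h)]
        gcongr
        exacts [hcoeff k, hP k hx]
    _ = ∑ k ∈ Finset.range (ℓ + 1), (2 * (k : ℝ) + 1) * M :=
        Finset.sum_congr rfl fun k _ => by field_simp
    _ = ((ℓ : ℝ) + 1) ^ 2 * M := by
        rw [← Finset.sum_mul, sum_range_two_mul_add_one]
        push_cast; ring

/-- (Sup-norm stability of the Legendre projection.) For every
`ℓ ≥ 0`, `h > 0` and continuous `g : [0,h] → ℝ` with `sup_{[0,h]} |g| ≤ M`, one has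
`sup_{x ∈ [0,h]} |(Pg)(x)| ≤ (ℓ+1)² M`. -/
theorem legProj_sup_norm_stability
    (ℓ : ℕ) (h : ℝ) (hh : 0 < h) (g : ℝ → ℝ)
    (hg : ContinuousOn g (Set.Icc 0 h))
    (M : ℝ) (hM : ∀ y ∈ Set.Icc (0:ℝ) h, |g y| ≤ M) :
    ∀ x ∈ Set.Icc (0:ℝ) h, |legProj ℓ h g x| ≤ ((ℓ : ℝ) + 1) ^ 2 * M :=
  legProj_sup_norm_stability_general ℓ h hh g M hM
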